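/- arXiv:2501.02089 — 2 statements merged into one kernel-verified Lean document; each statement's English description precedes it below -/
import Mathlib

section
/- (Simulation lemma.) Let two finite-horizon tabular MDPs share the same state space S, action space A, horizon H, initial distribution d₁, and mean reward functions r_h with values in [0,1], but have transition kernels P and P̂ respectively. Then for every policy π, the values v^π_P and v^π_{P̂} computed in the two MDPs satisfy |v^π_{P̂} − v^π_P| ≤ H² · max_{h,s,a} Σ_{s'} |P̂_h(s'|s,a) − P_h(s'|s,a)|. -/
open Finset MeasureTheory

section MDPDefs

variable {S A : Type} [Fintype S] [Fintype A]

/-- `π` is a (time-inhomogeneous, Markov) policy: `π t s a = π_t(a|s)`. -/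
def IsPolicy (π : ℕ → S → A → ℝ) : Prop :=
  (∀ t s a, 0 ≤ π t s a) ∧ ∀ t s, ∑ a : A, π t s a = 1

/-- `P` is a transition kernel: `P t s a s' = P_t(s'|s,a)`. -/
def IsKernel (P : ℕ → S → A → S → ℝ) : Prop :=
  (∀ t s a s', 0 ≤ P t s a s') ∧ ∀ t s a, ∑ s' : S, P t s a s' = 1

/-- `d` is a probability distribution on states. -/
def IsDist (d : S → ℝ) : Prop := (∀ s, 0 ≤ d s) ∧ ∑ s : S, d s = 1

/-- Value function `V^π_t` (time `t` is 0-indexed, horizon `H`, `V^π_t = 0` for `t ≥ H`):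
`V^π_t(s) = Σ_a π_t(a|s) (r_t(s,a) + Σ_{s'} P_t(s'|s,a) V^π_{t+1}(s'))`. -/
noncomputable def valueV (H : ℕ) (P : ℕ → S → A → S → ℝ) (r : ℕ → S → A → ℝ)
    (π : ℕ → S → A → ℝ) (t : ℕ) : S → ℝ :=
  if _h : t < H then
    fun s => ∑ a : A, π t s a * (r t s a + ∑ s' : S, P t s a s' * valueV H P r π (t + 1) s')
  else fun _ => 0
termination_by H - t
decreasing_by omega

/-- Q function `Q^π_t(s,a) = r_t(s,a) + Σ_{s'} P_t(s'|s,a) V^π_{t+1}(s')`. -/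
noncomputable def qval (H : ℕ) (P : ℕ → S → A → S → ℝ) (r : ℕ → S → A → ℝ)
    (π : ℕ → S → A → ℝ) (t : ℕ) (s : S) (a : A) : ℝ :=
  r t s a + ∑ s' : S, P t s a s' * valueV H P r π (t + 1) s'

/-- The value of a policy: `v^π = Σ_s d₁(s) V^π_1(s)`. -/
noncomputable def vval (H : ℕ) (P : ℕ → S → A → S → ℝ) (r : ℕ → S → A → ℝ)
    (π : ℕ → S → A → ℝ) (d1 : S → ℝ) : ℝ :=
  ∑ s : S, d1 s * valueV H P r π 0 s

/-- Marginal state occupancy `d^π_t(s)` (time 0-indexed). -/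
noncomputable def occS (P : ℕ → S → A → S → ℝ) (π : ℕ → S → A → ℝ) (d1 : S → ℝ) :
    ℕ → S → ℝ
  | 0 => d1
  | t + 1 => fun s' => ∑ s : S, ∑ a : A, occS P π d1 t s * π t s a * P t s a s'

/-- Marginal state-action occupancy `d^π_t(s,a) = d^π_t(s) π_t(a|s)`. -/
noncomputable def occSA (P : ℕ → S → A → S → ℝ) (π : ℕ → S → A → ℝ) (d1 : S → ℝ)
    (t : ℕ) (s : S) (a : A) : ℝ :=
  occS P π d1 t s * π t s a

end MDPDefs
section AuxLemmas

variable {S A : Type} [Fintype S] [Fintype A]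

lemma valueV_bound (H : ℕ) (P : ℕ → S → A → S → ℝ) (r : ℕ → S → A → ℝ)
    (π : ℕ → S → A → ℝ) (hP : IsKernel P)
    (hr : ∀ t s a, r t s a ∈ Set.Icc (0 : ℝ) 1) (hπ : IsPolicy π) :
    ∀ k t, H - t ≤ k → t ≤ H → ∀ s : S,
      0 ≤ valueV H P r π t s ∧ valueV H P r π t s ≤ (H : ℝ) - t := by
  intro k
  induction k with
  | zero =>
    intro t hk ht s
    have hteq : t = H := by omega
    rw [valueV, dif_neg (by omega)]
    subst hteq
    simp
  | succ k ih =>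
    intro t hk ht s
    by_cases hlt : t < H
    · rw [valueV, dif_pos hlt]
      have ih' := fun s' => ih (t+1) (by omega) (by omega) s'
      constructor
      · apply Finset.sum_nonneg
        intro a _
        apply mul_nonneg (hπ.1 t s a)
        apply add_nonneg (hr t s a).1
        exact Finset.sum_nonneg fun s' _ => mul_nonneg (hP.1 t s a s') (ih' s').1
      · calc ∑ a : A, π t s a * (r t s a + ∑ s' : S, P t s a s' * valueV H P r π (t + 1) s')
            ≤ ∑ a : A, π t s a * ((H : ℝ) - t) := by
              apply Finset.sum_le_sum
              intro a _
              apply mul_le_mul_of_nonneg_left _ (hπ.1 t s a)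
              have h1 : ∑ s' : S, P t s a s' * valueV H P r π (t + 1) s'
                  ≤ ∑ s' : S, P t s a s' * ((H : ℝ) - ((t+1:ℕ):ℝ)) := by
                apply Finset.sum_le_sum
                intro s' _
                exact mul_le_mul_of_nonneg_left (ih' s').2 (hP.1 t s a s')
              have h2 : ∑ s' : S, P t s a s' * ((H : ℝ) - ((t+1:ℕ):ℝ))
                  = (H : ℝ) - (t+1) := by
                rw [← Finset.sum_mul, hP.2 t s a, one_mul]; push_cast; ring
              have hr1 := (hr t s a).2
              push_cast at h1 h2 ⊢
              linarith
          _ = (H : ℝ) - t := by rw [← Finset.sum_mul, hπ.2 t s, one_mul]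
    · rw [valueV, dif_neg hlt]
      have : t = H := by omega
      subst this
      simp

lemma valueV_of_lt {H t : ℕ} (hlt : t < H) (P : ℕ → S → A → S → ℝ)
    (r π : ℕ → S → A → ℝ) (s : S) :
    valueV H P r π t s
      = ∑ a : A, π t s a * (r t s a + ∑ s' : S, P t s a s' * valueV H P r π (t + 1) s') := by
  rw [valueV, dif_pos hlt]

lemma valueV_of_ge {H t : ℕ} (hge : H ≤ t) (P : ℕ → S → A → S → ℝ)
    (r π : ℕ → S → A → ℝ) (s : S) :
    valueV H P r π t s = 0 := by
  rw [valueV, dif_neg (by omega)]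

lemma diff_bound' (H : ℕ) (P Phat : ℕ → S → A → S → ℝ) (r : ℕ → S → A → ℝ)
    (π : ℕ → S → A → ℝ) (hP : IsKernel P) (hPhat : IsKernel Phat)
    (hr : ∀ t s a, r t s a ∈ Set.Icc (0 : ℝ) 1) (hπ : IsPolicy π)
    (ε : ℝ)
    (hεb : ∀ t, t < H → ∀ s a, ∑ s' : S, |Phat t s a s' - P t s a s'| ≤ ε) :
    ∀ k t, H - t ≤ k → t ≤ H → ∀ s : S,
      |valueV H Phat r π t s - valueV H P r π t s|
        ≤ ((H : ℝ) - t) * ((H : ℝ) * ε) := by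
  intro k
  induction k with
  | zero =>
    intro t hk ht s
    have hteq : t = H := by omega
    rw [valueV_of_ge (by omega), valueV_of_ge (by omega)]
    subst hteq
    simp
  | succ k ih =>
    intro t hk ht s
    by_cases hlt : t < H
    · have ih' := fun s' => ih (t+1) (by omega) (by omega) s'
      have hVb := fun s' => valueV_bound H Phat r π hPhat hr hπ (H - (t+1)) (t+1) le_rfl (by omega) s'
      rw [valueV_of_lt hlt, valueV_of_lt hlt, ← Finset.sum_sub_distrib]
      have key : ∀ a : A,
          |π t s a * (r t s a + ∑ s' : S, Phat t s a s' * valueV H Phat r π (t + 1) s')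
            - π t s a * (r t s a + ∑ s' : S, P t s a s' * valueV H P r π (t + 1) s')|
          ≤ π t s a * (((H : ℝ) - t) * ((H : ℝ) * ε)) := by
        intro a
        rw [← mul_sub, abs_mul, abs_of_nonneg (hπ.1 t s a)]
        apply mul_le_mul_of_nonneg_left _ (hπ.1 t s a)
        have heq : (r t s a + ∑ s' : S, Phat t s a s' * valueV H Phat r π (t + 1) s')
            - (r t s a + ∑ s' : S, P t s a s' * valueV H P r π (t + 1) s')
            = (∑ s' : S, (Phat t s a s' - P t s a s') * valueV H Phat r π (t + 1) s')
              + ∑ s' : S, P t s a s' * (valueV H Phat r π (t + 1) s' - valueV H P r π (t + 1) s') := by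
          rw [← Finset.sum_add_distrib]
          have hcong : ∑ x : S,
              ((Phat t s a x - P t s a x) * valueV H Phat r π (t + 1) x +
                P t s a x * (valueV H Phat r π (t + 1) x - valueV H P r π (t + 1) x))
              = ∑ x : S, (Phat t s a x * valueV H Phat r π (t + 1) x
                  - P t s a x * valueV H P r π (t + 1) x) :=
            Finset.sum_congr rfl fun x _ => by ring
          rw [hcong, Finset.sum_sub_distrib]
          ring
        rw [heq]
        have hb1 : |∑ s' : S, (Phat t s a s' - P t s a s') * valueV H Phat r π (t + 1) s'|
            ≤ (H : ℝ) * ε := by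
          calc |∑ s' : S, (Phat t s a s' - P t s a s') * valueV H Phat r π (t + 1) s'|
              ≤ ∑ s' : S, |(Phat t s a s' - P t s a s') * valueV H Phat r π (t + 1) s'| :=
                Finset.abs_sum_le_sum_abs _ _
            _ ≤ ∑ s' : S, |Phat t s a s' - P t s a s'| * (H : ℝ) := by
                apply Finset.sum_le_sum
                intro s' _
                rw [abs_mul]
                apply mul_le_mul_of_nonneg_left _ (abs_nonneg _)
                rw [abs_of_nonneg (hVb s').1]
                have := (hVb s').2
                have ht1 : ((t+1 : ℕ) : ℝ) ≥ 0 := by positivity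
                linarith
            _ = (∑ s' : S, |Phat t s a s' - P t s a s'|) * (H : ℝ) := by
                rw [Finset.sum_mul]
            _ ≤ ε * (H : ℝ) := by
                apply mul_le_mul_of_nonneg_right (hεb t hlt s a) (by positivity)
            _ = (H : ℝ) * ε := by ring
        have hb2 : |∑ s' : S, P t s a s' * (valueV H Phat r π (t + 1) s' - valueV H P r π (t + 1) s')|
            ≤ ((H : ℝ) - (t+1 : ℕ)) * ((H : ℝ) * ε) := by
          calc |∑ s' : S, P t s a s' * (valueV H Phat r π (t + 1) s' - valueV H P r π (t + 1) s')|
              ≤ ∑ s' : S, |P t s a s' * (valueV H Phat r π (t + 1) s' - valueV H P r π (t + 1) s')| :=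
                Finset.abs_sum_le_sum_abs _ _
            _ ≤ ∑ s' : S, P t s a s' * (((H : ℝ) - (t+1 : ℕ)) * ((H : ℝ) * ε)) := by
                apply Finset.sum_le_sum
                intro s' _
                rw [abs_mul, abs_of_nonneg (hP.1 t s a s')]
                exact mul_le_mul_of_nonneg_left (ih' s') (hP.1 t s a s')
            _ = ((H : ℝ) - (t+1 : ℕ)) * ((H : ℝ) * ε) := by
                rw [← Finset.sum_mul, hP.2 t s a, one_mul]
        calc |(∑ s' : S, (Phat t s a s' - P t s a s') * valueV H Phat r π (t + 1) s')
              + ∑ s' : S, P t s a s' * (valueV H Phat r π (t + 1) s' - valueV H P r π (t + 1) s')|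
            ≤ _ + _ := abs_add_le _ _
          _ ≤ (H : ℝ) * ε + ((H : ℝ) - (t+1 : ℕ)) * ((H : ℝ) * ε) := add_le_add hb1 hb2
          _ = ((H : ℝ) - t) * ((H : ℝ) * ε) := by push_cast; ring
      calc |∑ a : A, (π t s a * (r t s a + ∑ s' : S, Phat t s a s' * valueV H Phat r π (t + 1) s')
              - π t s a * (r t s a + ∑ s' : S, P t s a s' * valueV H P r π (t + 1) s'))|
          ≤ ∑ a : A, |π t s a * (r t s a + ∑ s' : S, Phat t s a s' * valueV H Phat r π (t + 1) s')
              - π t s a * (r t s a + ∑ s' : S, P t s a s' * valueV H P r π (t + 1) s')| :=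
            Finset.abs_sum_le_sum_abs _ _
        _ ≤ ∑ a : A, π t s a * (((H : ℝ) - t) * ((H : ℝ) * ε)) :=
            Finset.sum_le_sum fun a _ => key a
        _ = ((H : ℝ) - t) * ((H : ℝ) * ε) := by
            rw [← Finset.sum_mul, hπ.2 t s, one_mul]
    · have hteq : t = H := by omega
      rw [valueV_of_ge (by omega), valueV_of_ge (by omega)]
      subst hteq
      simp

end AuxLemmas

/-- Simulation lemma.  Let two finite-horizon tabular MDPs
share the same state space `S`, action space `A`, horizon `H`, initial
distribution `d₁`, and mean reward functions `r_h ∈ [0,1]`, but have transition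
kernels `P` and `P̂` respectively.  Then for every policy `π`,
`|v^π_{P̂} − v^π_P| ≤ H² · max_{h,s,a} Σ_{s'} |P̂_h(s'|s,a) − P_h(s'|s,a)|`. -/
theorem simulation_lemma {S A : Type} [Fintype S] [Fintype A]
    [Nonempty S] [Nonempty A]
    (H : ℕ) (hH : 1 ≤ H)
    (P Phat : ℕ → S → A → S → ℝ) (r : ℕ → S → A → ℝ)
    (π : ℕ → S → A → ℝ) (d1 : S → ℝ)
    (hP : IsKernel P) (hPhat : IsKernel Phat)
    (hr : ∀ t s a, r t s a ∈ Set.Icc (0 : ℝ) 1)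
    (hπ : IsPolicy π) (hd1 : IsDist d1) :
    |vval H Phat r π d1 - vval H P r π d1|
      ≤ (H : ℝ) ^ 2 *
        ⨆ h : Fin H, ⨆ s : S, ⨆ a : A, ∑ s' : S, |Phat h s a s' - P h s a s'| := by
  set ε := ⨆ h : Fin H, ⨆ s : S, ⨆ a : A, ∑ s' : S, |Phat h s a s' - P h s a s'| with hεdef
  have hεb : ∀ t, t < H → ∀ (s : S) (a : A),
      ∑ s' : S, |Phat t s a s' - P t s a s'| ≤ ε := by
    intro t ht s a
    calc ∑ s' : S, |Phat t s a s' - P t s a s'|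
        ≤ ⨆ a' : A, ∑ s' : S, |Phat t s a' s' - P t s a' s'| :=
          le_ciSup (f := fun a' : A => ∑ s' : S, |Phat t s a' s' - P t s a' s'|)
            (Set.Finite.bddAbove (Set.finite_range _)) a
      _ ≤ ⨆ s'' : S, ⨆ a' : A, ∑ s' : S, |Phat t s'' a' s' - P t s'' a' s'| :=
          le_ciSup (f := fun s'' : S => ⨆ a' : A,
              ∑ s' : S, |Phat t s'' a' s' - P t s'' a' s'|)
            (Set.Finite.bddAbove (Set.finite_range _)) s
      _ ≤ ε :=
          le_ciSup (f := fun h : Fin H => ⨆ s'' : S, ⨆ a' : A,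
              ∑ s' : S, |Phat h s'' a' s' - P h s'' a' s'|)
            (Set.Finite.bddAbove (Set.finite_range _)) (⟨t, ht⟩ : Fin H)
  have hdiff := diff_bound' H P Phat r π hP hPhat hr hπ ε hεb H 0 (by omega) (by omega)
  have hmain : ∀ s : S, |valueV H Phat r π 0 s - valueV H P r π 0 s|
      ≤ (H : ℝ) * ((H : ℝ) * ε) := by
    intro s
    have := hdiff s
    simpa using this
  calc |vval H Phat r π d1 - vval H P r π d1|
      = |∑ s : S, d1 s * (valueV H Phat r π 0 s - valueV H P r π 0 s)| := by
        unfold vval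
        rw [← Finset.sum_sub_distrib]
        congr 1
        exact Finset.sum_congr rfl fun s _ => by ring
    _ ≤ ∑ s : S, |d1 s * (valueV H Phat r π 0 s - valueV H P r π 0 s)| :=
        Finset.abs_sum_le_sum_abs _ _
    _ ≤ ∑ s : S, d1 s * ((H : ℝ) * ((H : ℝ) * ε)) := by
        apply Finset.sum_le_sum
        intro s _
        rw [abs_mul, abs_of_nonneg (hd1.1 s)]
        exact mul_le_mul_of_nonneg_left (hmain s) (hd1.1 s)
    _ = (H : ℝ) * ((H : ℝ) * ε) := by rw [← Finset.sum_mul, hd1.2, one_mul]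
    _ = (H : ℝ) ^ 2 * ε := by ring
end

section
/- (Intrinsic bound recovers the uniform-coverage minimax rate.) In a finite-horizon tabular MDP with rewards in [0,1], let π* be an optimal policy with value functions V*, let μ be a behavior policy, and let n ≥ 1. Suppose there is d_m > 0 with d^μ_h(s,a) ≥ d_m for every (h,s,a) with d^{π*}_h(s,a) > 0. Then Σ_{h=1}^H Σ_{(s,a): d^{π*}_h(s,a)>0} d^{π*}_h(s,a) · sqrt( Var[ r_h + V*_{h+1}(s_{h+1}) | s_h=s, a_h=a ] / (n · d^μ_h(s,a)) ) ≤ sqrt( H³ / (n · d_m) ). -/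
open Finset MeasureTheory

section RewardDefs

variable {S A : Type} [Fintype S] [Fintype A]

/-- `R` is a family of reward distributions supported on `[0,1]`. -/
def IsRewardDist (R : ℕ → S → A → MeasureTheory.Measure ℝ) : Prop :=
  ∀ t (s : S) (a : A),
    MeasureTheory.IsProbabilityMeasure (R t s a) ∧ R t s a ((Set.Icc (0 : ℝ) 1)ᶜ) = 0

/-- The mean reward `r̄_t(s,a)` of the reward distribution `R_t(·|s,a)`. -/
noncomputable def rbar (R : ℕ → S → A → MeasureTheory.Measure ℝ) (t : ℕ) (s : S) (a : A) : ℝ :=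
  ∫ x, x ∂(R t s a)

/-- The conditional variance `Var[r_t + V^π_{t+1}(s_{t+1}) | s_t = s, a_t = a]`,
where `s_{t+1} ~ P_t(·|s,a)` and `r_t ~ R_t(·|s,a)` are independent. -/
noncomputable def condVar (H : ℕ) (P : ℕ → S → A → S → ℝ)
    (R : ℕ → S → A → MeasureTheory.Measure ℝ)
    (π : ℕ → S → A → ℝ) (t : ℕ) (s : S) (a : A) : ℝ :=
  (∑ s' : S, P t s a s' * ∫ x, (valueV H P (rbar R) π (t + 1) s' + x) ^ 2 ∂(R t s a))
    - qval H P (rbar R) π t s a ^ 2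

end RewardDefs
section Aux
variable {S A : Type} [Fintype S] [Fintype A]

lemma valueV_spec (H : ℕ) (P : ℕ → S → A → S → ℝ) (r : ℕ → S → A → ℝ)
    (π : ℕ → S → A → ℝ) {t : ℕ} (ht : t < H) (s : S) :
    valueV H P r π t s
      = ∑ a : A, π t s a * (r t s a + ∑ s' : S, P t s a s' * valueV H P r π (t + 1) s') := by
  rw [valueV]
  simp [dif_pos ht]

lemma valueV_of_le (H : ℕ) (P : ℕ → S → A → S → ℝ) (r : ℕ → S → A → ℝ)
    (π : ℕ → S → A → ℝ) {t : ℕ} (ht : ¬ t < H) (s : S) :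
    valueV H P r π t s = 0 := by
  rw [valueV]
  simp [dif_neg ht]

end Aux
section Aux2
variable {S A : Type} [Fintype S] [Fintype A]

lemma valueV_nonneg (H : ℕ) (P : ℕ → S → A → S → ℝ) (r : ℕ → S → A → ℝ)
    (π : ℕ → S → A → ℝ) (hP : IsKernel P) (hπ : IsPolicy π)
    (hr : ∀ t s a, 0 ≤ r t s a) (t : ℕ) (s : S) :
    0 ≤ valueV H P r π t s := by
  by_cases ht : t < H
  · rw [valueV_spec H P r π ht s]
    refine Finset.sum_nonneg fun a _ => mul_nonneg (hπ.1 t s a) (add_nonneg (hr t s a) ?_)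
    exact Finset.sum_nonneg fun s' _ =>
      mul_nonneg (hP.1 t s a s') (valueV_nonneg H P r π hP hπ hr (t + 1) s')
  · rw [valueV_of_le H P r π ht s]
termination_by H - t
decreasing_by omega

lemma valueV_le (H : ℕ) (P : ℕ → S → A → S → ℝ) (r : ℕ → S → A → ℝ)
    (π : ℕ → S → A → ℝ) (hP : IsKernel P) (hπ : IsPolicy π)
    (hr : ∀ t s a, r t s a ≤ 1) (t : ℕ) (ht : t ≤ H) (s : S) :
    valueV H P r π t s ≤ (H : ℝ) - t := by
  by_cases ht' : t < H
  · rw [valueV_spec H P r π ht' s]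
    have key : ∀ a : A, π t s a * (r t s a + ∑ s' : S, P t s a s' * valueV H P r π (t + 1) s')
        ≤ π t s a * ((H : ℝ) - t) := by
      intro a
      refine mul_le_mul_of_nonneg_left ?_ (hπ.1 t s a)
      have h2 : ∑ s' : S, P t s a s' * valueV H P r π (t + 1) s'
          ≤ ∑ s' : S, P t s a s' * ((H : ℝ) - (t + 1)) := by
        refine Finset.sum_le_sum fun s' _ => mul_le_mul_of_nonneg_left ?_ (hP.1 t s a s')
        have := valueV_le H P r π hP hπ hr (t + 1) (by omega) s'
        simpa using this
      have h3 : ∑ s' : S, P t s a s' * ((H : ℝ) - (t + 1)) = (H : ℝ) - (t + 1) := by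
        rw [← Finset.sum_mul, hP.2 t s a, one_mul]
      have := hr t s a
      push_cast at h3 ⊢
      linarith [h2.trans_eq h3]
    calc ∑ a : A, π t s a * (r t s a + ∑ s' : S, P t s a s' * valueV H P r π (t + 1) s')
        ≤ ∑ a : A, π t s a * ((H : ℝ) - t) := Finset.sum_le_sum fun a _ => key a
      _ = (H : ℝ) - t := by rw [← Finset.sum_mul, hπ.2 t s, one_mul]
  · have : t = H := by omega
    rw [valueV_of_le H P r π ht' s, this]
    simp
termination_by H - t
decreasing_by omega

lemma occS_nonneg (P : ℕ → S → A → S → ℝ) (π : ℕ → S → A → ℝ) (d1 : S → ℝ)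
    (hP : IsKernel P) (hπ : IsPolicy π) (hd1 : IsDist d1) (t : ℕ) (s : S) :
    0 ≤ occS P π d1 t s := by
  induction t generalizing s with
  | zero => exact hd1.1 s
  | succ t ih =>
    refine Finset.sum_nonneg fun s0 _ => Finset.sum_nonneg fun a _ => ?_
    exact mul_nonneg (mul_nonneg (ih s0) (hπ.1 t s0 a)) (hP.1 t s0 a s)

lemma occS_sum (P : ℕ → S → A → S → ℝ) (π : ℕ → S → A → ℝ) (d1 : S → ℝ)
    (hP : IsKernel P) (hπ : IsPolicy π) (hd1 : IsDist d1) (t : ℕ) :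
    ∑ s : S, occS P π d1 t s = 1 := by
  induction t with
  | zero => exact hd1.2
  | succ t ih =>
    have : ∑ s' : S, ∑ s : S, ∑ a : A, occS P π d1 t s * π t s a * P t s a s'
        = ∑ s : S, ∑ a : A, occS P π d1 t s * π t s a * (∑ s' : S, P t s a s') := by
      rw [Finset.sum_comm]
      exact Finset.sum_congr rfl fun s _ => by
        rw [Finset.sum_comm]
        exact Finset.sum_congr rfl fun a _ => (Finset.mul_sum _ _ _).symm
    show ∑ s' : S, ∑ s : S, ∑ a : A, occS P π d1 t s * π t s a * P t s a s' = 1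
    rw [this]
    have : ∀ s : S, ∑ a : A, occS P π d1 t s * π t s a * (∑ s' : S, P t s a s')
        = occS P π d1 t s := by
      intro s
      have : ∀ a : A, occS P π d1 t s * π t s a * (∑ s' : S, P t s a s')
          = occS P π d1 t s * π t s a := fun a => by rw [hP.2 t s a, mul_one]
      rw [Finset.sum_congr rfl fun a _ => this a, ← Finset.mul_sum, hπ.2 t s, mul_one]
    rw [Finset.sum_congr rfl fun s _ => this s, ih]

lemma occSA_nonneg (P : ℕ → S → A → S → ℝ) (π : ℕ → S → A → ℝ) (d1 : S → ℝ)
    (hP : IsKernel P) (hπ : IsPolicy π) (hd1 : IsDist d1) (t : ℕ) (s : S) (a : A) :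
    0 ≤ occSA P π d1 t s a :=
  mul_nonneg (occS_nonneg P π d1 hP hπ hd1 t s) (hπ.1 t s a)

lemma occSA_sum (P : ℕ → S → A → S → ℝ) (π : ℕ → S → A → ℝ) (d1 : S → ℝ)
    (hP : IsKernel P) (hπ : IsPolicy π) (hd1 : IsDist d1) (t : ℕ) :
    ∑ s : S, ∑ a : A, occSA P π d1 t s a = 1 := by
  have : ∀ s : S, ∑ a : A, occSA P π d1 t s a = occS P π d1 t s := fun s => by
    unfold occSA; rw [← Finset.mul_sum, hπ.2 t s, mul_one]
  rw [Finset.sum_congr rfl fun s _ => this s, occS_sum P π d1 hP hπ hd1 t]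

end Aux2
section Aux3
open MeasureTheory

lemma reward_ae (ν : Measure ℝ) (hsupp : ν (Set.Icc (0:ℝ) 1)ᶜ = 0) :
    ∀ᵐ x ∂ν, x ∈ Set.Icc (0:ℝ) 1 := by
  rw [MeasureTheory.ae_iff]
  have : {a : ℝ | ¬ a ∈ Set.Icc (0:ℝ) 1} = (Set.Icc (0:ℝ) 1)ᶜ := rfl
  rw [this, hsupp]

lemma reward_int_id (ν : Measure ℝ) [IsProbabilityMeasure ν]
    (hae : ∀ᵐ x ∂ν, x ∈ Set.Icc (0:ℝ) 1) : Integrable (fun x : ℝ => x) ν :=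
  ⟨measurable_id.aestronglyMeasurable,
    HasFiniteIntegral.of_bounded (C := 1)
      (hae.mono fun x hx => by rw [Real.norm_eq_abs, abs_le]; exact ⟨by linarith [hx.1], hx.2⟩)⟩

lemma reward_int_sq (ν : Measure ℝ) [IsProbabilityMeasure ν]
    (hae : ∀ᵐ x ∂ν, x ∈ Set.Icc (0:ℝ) 1) : Integrable (fun x : ℝ => x ^ 2) ν :=
  ⟨(measurable_id.pow_const 2).aestronglyMeasurable,
    HasFiniteIntegral.of_bounded (C := 1)
      (hae.mono fun x hx => by
        rw [Real.norm_eq_abs, abs_le]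
        constructor <;> nlinarith [hx.1, hx.2])⟩

lemma reward_mean_nonneg (ν : Measure ℝ) (hae : ∀ᵐ x ∂ν, x ∈ Set.Icc (0:ℝ) 1) :
    0 ≤ ∫ x, x ∂ν :=
  integral_nonneg_of_ae (hae.mono fun x hx => hx.1)

lemma reward_mean_le_one (ν : Measure ℝ) [IsProbabilityMeasure ν]
    (hae : ∀ᵐ x ∂ν, x ∈ Set.Icc (0:ℝ) 1) : ∫ x, x ∂ν ≤ 1 := by
  have := integral_mono_ae (reward_int_id ν hae) (integrable_const (1:ℝ))
    (hae.mono fun x hx => hx.2)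
  simpa using this

lemma reward_m2_le_mean (ν : Measure ℝ) [IsProbabilityMeasure ν]
    (hae : ∀ᵐ x ∂ν, x ∈ Set.Icc (0:ℝ) 1) : ∫ x, x ^ 2 ∂ν ≤ ∫ x, x ∂ν :=
  integral_mono_ae (reward_int_sq ν hae) (reward_int_id ν hae)
    (hae.mono fun x hx => by show x ^ 2 ≤ x; nlinarith [hx.1, hx.2])

lemma reward_moment_exp (ν : Measure ℝ) [IsProbabilityMeasure ν]
    (hae : ∀ᵐ x ∂ν, x ∈ Set.Icc (0:ℝ) 1) (c : ℝ) :
    ∫ x, (c + x) ^ 2 ∂ν = c ^ 2 + 2 * c * (∫ x, x ∂ν) + ∫ x, x ^ 2 ∂ν := by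
  have h1 := reward_int_id ν hae
  have h2 := reward_int_sq ν hae
  have he : ∀ x : ℝ, (c + x) ^ 2 = c ^ 2 + 2 * c * x + x ^ 2 := fun x => by ring
  simp_rw [he]
  rw [integral_add (f := fun x : ℝ => c ^ 2 + 2 * c * x) (g := fun x : ℝ => x ^ 2)
      (((integrable_const _).add (h1.const_mul _))) h2,
    integral_add (f := fun _ : ℝ => c ^ 2) (g := fun x : ℝ => 2 * c * x)
      (integrable_const _) (h1.const_mul _), integral_const, MeasureTheory.integral_const_mul]
  simp

lemma reward_sq_mean_le_m2 (ν : Measure ℝ) [IsProbabilityMeasure ν]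
    (hae : ∀ᵐ x ∂ν, x ∈ Set.Icc (0:ℝ) 1) : (∫ x, x ∂ν) ^ 2 ≤ ∫ x, x ^ 2 ∂ν := by
  set m := ∫ x, x ∂ν
  have h0 : 0 ≤ ∫ x, (-m + x) ^ 2 ∂ν := integral_nonneg fun x => sq_nonneg _
  rw [reward_moment_exp ν hae (-m)] at h0
  nlinarith [h0]

end Aux3
section Aux4
open MeasureTheory
variable {S A : Type} [Fintype S] [Fintype A]

lemma jensen_sq {ι : Type*} [Fintype ι] (p f : ι → ℝ) (hp : ∀ i, 0 ≤ p i)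
    (hsum : ∑ i, p i = 1) : (∑ i, p i * f i) ^ 2 ≤ ∑ i, p i * f i ^ 2 := by
  have key := Finset.sum_mul_sq_le_sq_mul_sq Finset.univ
    (fun i => Real.sqrt (p i)) (fun i => Real.sqrt (p i) * f i)
  have e1 : ∀ i, Real.sqrt (p i) * (Real.sqrt (p i) * f i) = p i * f i :=
    fun i => by rw [← mul_assoc, Real.mul_self_sqrt (hp i)]
  have e2 : ∀ i, Real.sqrt (p i) ^ 2 = p i := fun i => Real.sq_sqrt (hp i)
  have e3 : ∀ i, (Real.sqrt (p i) * f i) ^ 2 = p i * f i ^ 2 :=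
    fun i => by rw [mul_pow, e2]
  rw [Finset.sum_congr rfl fun i _ => e1 i, Finset.sum_congr rfl fun i _ => e2 i,
    Finset.sum_congr rfl fun i _ => e3 i, hsum, one_mul] at key
  exact key

lemma rbar_mem (R : ℕ → S → A → Measure ℝ) (hR : IsRewardDist R) (t : ℕ) (s : S) (a : A) :
    0 ≤ rbar R t s a ∧ rbar R t s a ≤ 1 := by
  haveI := (hR t s a).1
  have hae := reward_ae (R t s a) (hR t s a).2
  exact ⟨reward_mean_nonneg _ hae, reward_mean_le_one _ hae⟩

lemma condVar_eq (H : ℕ) (P : ℕ → S → A → S → ℝ) (R : ℕ → S → A → Measure ℝ)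
    (π : ℕ → S → A → ℝ) (hP : IsKernel P) (hR : IsRewardDist R) (t : ℕ) (s : S) (a : A) :
    condVar H P R π t s a
      = ((∑ s' : S, P t s a s' * (valueV H P (rbar R) π (t + 1) s') ^ 2)
          - (∑ s' : S, P t s a s' * valueV H P (rbar R) π (t + 1) s') ^ 2)
        + ((∫ x, x ^ 2 ∂(R t s a)) - (rbar R t s a) ^ 2) := by
  haveI := (hR t s a).1
  have hae := reward_ae (R t s a) (hR t s a).2
  set V := valueV H P (rbar R) π (t + 1) with hV
  set m2 := ∫ x, x ^ 2 ∂(R t s a) with hm2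
  set rb := rbar R t s a with hrb
  have h1 : ∀ s' : S, ∫ x, (V s' + x) ^ 2 ∂(R t s a)
      = V s' ^ 2 + 2 * V s' * rb + m2 := fun s' => by
    rw [hm2, hrb]; exact reward_moment_exp _ hae _
  unfold condVar qval
  rw [Finset.sum_congr rfl fun s' _ => by rw [h1 s']]
  have h2 : ∀ s' : S, P t s a s' * (V s' ^ 2 + 2 * V s' * rb + m2)
      = P t s a s' * V s' ^ 2 + 2 * rb * (P t s a s' * V s') + P t s a s' * m2 :=
    fun s' => by ring
  rw [Finset.sum_congr rfl fun s' _ => h2 s', Finset.sum_add_distrib, Finset.sum_add_distrib,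
    ← Finset.mul_sum, ← Finset.sum_mul, hP.2 t s a, one_mul]
  rw [← hrb]
  ring

lemma condVar_nonneg (H : ℕ) (P : ℕ → S → A → S → ℝ) (R : ℕ → S → A → Measure ℝ)
    (π : ℕ → S → A → ℝ) (hP : IsKernel P) (hR : IsRewardDist R) (t : ℕ) (s : S) (a : A) :
    0 ≤ condVar H P R π t s a := by
  rw [condVar_eq H P R π hP hR t s a]
  haveI := (hR t s a).1
  have hae := reward_ae (R t s a) (hR t s a).2
  have j := jensen_sq (fun s' => P t s a s') (fun s' => valueV H P (rbar R) π (t + 1) s')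
    (fun s' => hP.1 t s a s') (hP.2 t s a)
  have m := reward_sq_mean_le_m2 (R t s a) hae
  have : rbar R t s a = ∫ x, x ∂(R t s a) := rfl
  rw [this]
  linarith

lemma condVar_le (H : ℕ) (P : ℕ → S → A → S → ℝ) (R : ℕ → S → A → Measure ℝ)
    (π : ℕ → S → A → ℝ) (hP : IsKernel P) (hR : IsRewardDist R) (hπ : IsPolicy π)
    (t : ℕ) (ht : t < H) (s : S) (a : A) :
    condVar H P R π t s a
      ≤ (∑ s' : S, P t s a s' * (valueV H P (rbar R) π (t + 1) s') ^ 2)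
        - qval H P (rbar R) π t s a ^ 2 + (2 * (H : ℝ) - 2 * t - 1) := by
  rw [condVar_eq H P R π hP hR t s a]
  haveI := (hR t s a).1
  have hae := reward_ae (R t s a) (hR t s a).2
  set V := valueV H P (rbar R) π (t + 1) with hV
  set EV := ∑ s' : S, P t s a s' * V s' with hEV
  have hq : qval H P (rbar R) π t s a = rbar R t s a + EV := rfl
  have hm2le : (∫ x, x ^ 2 ∂(R t s a)) ≤ rbar R t s a := reward_m2_le_mean _ hae
  have hrb0 : 0 ≤ rbar R t s a := (rbar_mem R hR t s a).1
  have hrb1 : rbar R t s a ≤ 1 := (rbar_mem R hR t s a).2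
  have hEV0 : 0 ≤ EV := Finset.sum_nonneg fun s' _ => mul_nonneg (hP.1 t s a s')
    (valueV_nonneg H P (rbar R) π hP hπ (fun t s a => (rbar_mem R hR t s a).1) (t + 1) s')
  have hEVle : EV ≤ (H : ℝ) - t - 1 := by
    have h1 : ∀ s' : S, P t s a s' * V s' ≤ P t s a s' * ((H : ℝ) - (t + 1)) := by
      intro s'
      refine mul_le_mul_of_nonneg_left ?_ (hP.1 t s a s')
      have h := valueV_le H P (rbar R) π hP hπ (fun t s a => (rbar_mem R hR t s a).2) (t + 1)
        (by omega) s'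
      push_cast at h
      linarith
    have h2 : ∑ s' : S, P t s a s' * ((H : ℝ) - (t + 1)) = (H : ℝ) - (t + 1) := by
      rw [← Finset.sum_mul, hP.2 t s a, one_mul]
    calc EV ≤ ∑ s' : S, P t s a s' * ((H : ℝ) - (t + 1)) := Finset.sum_le_sum fun s' _ => h1 s'
      _ = (H : ℝ) - (t + 1) := h2
      _ ≤ (H : ℝ) - t - 1 := by push_cast; linarith
  rw [hq]
  nlinarith [hm2le, hrb0, hrb1, hEV0, hEVle, mul_nonneg (sub_nonneg.2 hrb1) hEV0]

end Aux4
section Aux5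
open MeasureTheory
variable {S A : Type} [Fintype S] [Fintype A]

lemma sum_lin (c : ℝ) (m : ℕ) :
    ∑ t ∈ Finset.range m, (c - 2 * (t : ℝ) - 1) = c * m - (m : ℝ) ^ 2 := by
  induction m with
  | zero => simp
  | succ m ih => rw [Finset.sum_range_succ, ih]; push_cast; ring

lemma sum_occ_condVar (H : ℕ) (P : ℕ → S → A → S → ℝ) (R : ℕ → S → A → Measure ℝ)
    (π : ℕ → S → A → ℝ) (d1 : S → ℝ)
    (hP : IsKernel P) (hR : IsRewardDist R) (hπ : IsPolicy π) (hd1 : IsDist d1) :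
    ∑ t ∈ Finset.range H, ∑ s : S, ∑ a : A,
        occSA P π d1 t s a * condVar H P R π t s a ≤ (H : ℝ) ^ 2 := by
  set r := rbar R with hr
  set V := valueV H P r π with hVdef
  set g : ℕ → ℝ := fun t => ∑ s : S, occS P π d1 t s * (V t s) ^ 2 with hg
  have hdnn := occSA_nonneg P π d1 hP hπ hd1
  have hsnn := occS_nonneg P π d1 hP hπ hd1
  -- Claim A : ∑ s a, occSA t s a * (∑ s', P * V(t+1,s')^2) = g (t+1)
  have claimA : ∀ t : ℕ, ∑ s : S, ∑ a : A,
      occSA P π d1 t s a * (∑ s' : S, P t s a s' * (V (t + 1) s') ^ 2) = g (t + 1) := by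
    intro t
    calc ∑ s : S, ∑ a : A, occSA P π d1 t s a * (∑ s' : S, P t s a s' * (V (t + 1) s') ^ 2)
        = ∑ s : S, ∑ a : A, ∑ s' : S,
            occS P π d1 t s * π t s a * P t s a s' * (V (t + 1) s') ^ 2 := by
          refine Finset.sum_congr rfl fun s _ => Finset.sum_congr rfl fun a _ => ?_
          rw [Finset.mul_sum]
          exact Finset.sum_congr rfl fun s' _ => by unfold occSA; ring
      _ = ∑ s : S, ∑ s' : S, ∑ a : A,
            occS P π d1 t s * π t s a * P t s a s' * (V (t + 1) s') ^ 2 :=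
          Finset.sum_congr rfl fun s _ => Finset.sum_comm
      _ = ∑ s' : S, ∑ s : S, ∑ a : A,
            occS P π d1 t s * π t s a * P t s a s' * (V (t + 1) s') ^ 2 := Finset.sum_comm
      _ = g (t + 1) := by
          refine Eq.symm (Finset.sum_congr rfl fun s' _ => ?_)
          show occS P π d1 (t + 1) s' * (V (t + 1) s') ^ 2 = _
          have hocc : occS P π d1 (t + 1) s'
              = ∑ s : S, ∑ a : A, occS P π d1 t s * π t s a * P t s a s' := rfl
          rw [hocc, Finset.sum_mul]
          exact Finset.sum_congr rfl fun s _ => Finset.sum_mul _ _ _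
  -- Claim B : g t ≤ ∑ s a, occSA t s a * qval^2, for t < H
  have claimB : ∀ t : ℕ, t < H → g t ≤ ∑ s : S, ∑ a : A,
      occSA P π d1 t s a * (qval H P r π t s a) ^ 2 := by
    intro t ht
    refine Finset.sum_le_sum fun s _ => ?_
    have hVs : V t s = ∑ a : A, π t s a * qval H P r π t s a := by
      rw [hVdef, valueV_spec H P r π ht s]; rfl
    have hJ : (V t s) ^ 2 ≤ ∑ a : A, π t s a * (qval H P r π t s a) ^ 2 := by
      rw [hVs]
      exact jensen_sq (fun a => π t s a) (fun a => qval H P r π t s a)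
        (fun a => hπ.1 t s a) (hπ.2 t s)
    calc occS P π d1 t s * (V t s) ^ 2
        ≤ occS P π d1 t s * ∑ a : A, π t s a * (qval H P r π t s a) ^ 2 :=
          mul_le_mul_of_nonneg_left hJ (hsnn t s)
      _ = ∑ a : A, occSA P π d1 t s a * (qval H P r π t s a) ^ 2 := by
          rw [Finset.mul_sum]
          exact Finset.sum_congr rfl fun a _ => by unfold occSA; ring
  -- per-time-step bound
  have step : ∀ t ∈ Finset.range H, ∑ s : S, ∑ a : A,
      occSA P π d1 t s a * condVar H P R π t s a
      ≤ (g (t + 1) - g t) + (2 * (H : ℝ) - 2 * t - 1) := by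
    intro t htm
    have ht : t < H := Finset.mem_range.mp htm
    have h1 : ∀ s a, occSA P π d1 t s a * condVar H P R π t s a
        ≤ occSA P π d1 t s a * ((∑ s' : S, P t s a s' * (V (t + 1) s') ^ 2)
            - qval H P r π t s a ^ 2 + (2 * (H : ℝ) - 2 * t - 1)) := fun s a =>
      mul_le_mul_of_nonneg_left (condVar_le H P R π hP hR hπ t ht s a) (hdnn t s a)
    calc ∑ s : S, ∑ a : A, occSA P π d1 t s a * condVar H P R π t s a
        ≤ ∑ s : S, ∑ a : A, occSA P π d1 t s a
            * ((∑ s' : S, P t s a s' * (V (t + 1) s') ^ 2)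
              - qval H P r π t s a ^ 2 + (2 * (H : ℝ) - 2 * t - 1)) :=
          Finset.sum_le_sum fun s _ => Finset.sum_le_sum fun a _ => h1 s a
      _ = (∑ s : S, ∑ a : A, occSA P π d1 t s a * (∑ s' : S, P t s a s' * (V (t + 1) s') ^ 2))
          - (∑ s : S, ∑ a : A, occSA P π d1 t s a * qval H P r π t s a ^ 2)
          + (2 * (H : ℝ) - 2 * t - 1)
            * (∑ s : S, ∑ a : A, occSA P π d1 t s a) := by
          have hterm : ∀ (s : S) (a : A), occSA P π d1 t s a
              * ((∑ s' : S, P t s a s' * (V (t + 1) s') ^ 2)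
                - qval H P r π t s a ^ 2 + (2 * (H : ℝ) - 2 * t - 1))
              = occSA P π d1 t s a * (∑ s' : S, P t s a s' * (V (t + 1) s') ^ 2)
                - occSA P π d1 t s a * qval H P r π t s a ^ 2
                + (2 * (H : ℝ) - 2 * t - 1) * occSA P π d1 t s a := fun s a => by ring
          simp_rw [hterm, Finset.sum_add_distrib, Finset.sum_sub_distrib, ← Finset.mul_sum]
      _ ≤ (g (t + 1) - g t) + (2 * (H : ℝ) - 2 * t - 1) := by
          rw [claimA t, occSA_sum P π d1 hP hπ hd1 t, mul_one]
          have := claimB t ht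
          linarith
  calc ∑ t ∈ Finset.range H, ∑ s : S, ∑ a : A, occSA P π d1 t s a * condVar H P R π t s a
      ≤ ∑ t ∈ Finset.range H, ((g (t + 1) - g t) + (2 * (H : ℝ) - 2 * t - 1)) :=
        Finset.sum_le_sum step
    _ = (g H - g 0) + (2 * (H : ℝ) * H - (H : ℝ) ^ 2) := by
        rw [Finset.sum_add_distrib, Finset.sum_range_sub g, sum_lin]
    _ ≤ (H : ℝ) ^ 2 := by
        have hgH : g H = 0 := by
          refine Finset.sum_eq_zero fun s _ => ?_
          rw [hVdef, valueV_of_le H P r π (lt_irrefl H) s]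
          ring
        have hg0 : 0 ≤ g 0 := Finset.sum_nonneg fun s _ =>
          mul_nonneg (hsnn 0 s) (sq_nonneg _)
        rw [hgH]
        nlinarith
end Aux5
/-- Intrinsic bound recovers the uniform-coverage minimax rate.
In a finite-horizon tabular MDP with rewards in `[0,1]`, let `π*` be an optimal
policy with value functions `V*`, let `μ` be a behavior policy, and `n ≥ 1`.
If `d^μ_h(s,a) ≥ d_m > 0` for every `(h,s,a)` with `d^{π*}_h(s,a) > 0`, then
`Σ_h Σ_{(s,a): d^{π*}_h(s,a)>0} d^{π*}_h(s,a)
   √( Var[r_h + V*_{h+1}(s_{h+1}) | s_h=s, a_h=a] / (n d^μ_h(s,a)) )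
 ≤ √( H³ / (n d_m) )`. -/
theorem intrinsic_bound_uniform_coverage {S A : Type} [Fintype S] [Fintype A]
    [Nonempty S] [Nonempty A]
    (H : ℕ) (hH : 1 ≤ H) (n : ℕ) (hn : 1 ≤ n)
    (P : ℕ → S → A → S → ℝ) (R : ℕ → S → A → Measure ℝ)
    (pistar μ : ℕ → S → A → ℝ) (d1 : S → ℝ)
    (hP : IsKernel P) (hR : IsRewardDist R)
    (hpistar : IsPolicy pistar) (hμ : IsPolicy μ) (hd1 : IsDist d1)
    (hopt : ∀ π' : ℕ → S → A → ℝ, IsPolicy π' →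
      vval H P (rbar R) π' d1 ≤ vval H P (rbar R) pistar d1)
    (dm : ℝ) (hdm : 0 < dm)
    (hcov : ∀ t < H, ∀ (s : S) (a : A),
      0 < occSA P pistar d1 t s a → dm ≤ occSA P μ d1 t s a) :
    ∑ t ∈ Finset.range H, ∑ s : S, ∑ a : A,
        (if 0 < occSA P pistar d1 t s a then
          occSA P pistar d1 t s a *
            Real.sqrt (condVar H P R pistar t s a / ((n : ℝ) * occSA P μ d1 t s a))
        else 0)
      ≤ Real.sqrt ((H : ℝ) ^ 3 / ((n : ℝ) * dm)) := by

  classical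
  set d := occSA P pistar d1 with hd
  set c := condVar H P R pistar with hc
  have hdnn : ∀ t s a, 0 ≤ d t s a := occSA_nonneg P pistar d1 hP hpistar hd1
  have hcnn : ∀ t s a, 0 ≤ c t s a := condVar_nonneg H P R pistar hP hR
  have hn' : (0:ℝ) < n := by exact_mod_cast Nat.lt_of_lt_of_le Nat.zero_lt_one hn
  have hndm : (0:ℝ) < (n : ℝ) * dm := mul_pos hn' hdm
  -- Step 1: termwise replacement of the behavior occupancy by dm
  have step1 : ∀ t ∈ Finset.range H, ∀ (s : S) (a : A),
      (if 0 < d t s a then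
        d t s a * Real.sqrt (c t s a / ((n : ℝ) * occSA P μ d1 t s a)) else 0)
      ≤ d t s a * Real.sqrt (c t s a / ((n : ℝ) * dm)) := by
    intro t htm s a
    have ht := Finset.mem_range.mp htm
    by_cases hpos : 0 < d t s a
    · rw [if_pos hpos]
      refine mul_le_mul_of_nonneg_left (Real.sqrt_le_sqrt ?_) (le_of_lt hpos)
      have hμd : dm ≤ occSA P μ d1 t s a := hcov t ht s a hpos
      gcongr
      exact hcnn t s a
    · rw [if_neg hpos]
      exact mul_nonneg (hdnn t s a) (Real.sqrt_nonneg _)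
  -- flattening triple sums
  have flat : ∀ f : ℕ → S → A → ℝ,
      ∑ t ∈ Finset.range H, ∑ s : S, ∑ a : A, f t s a
        = ∑ p ∈ (Finset.range H) ×ˢ (Finset.univ : Finset (S × A)), f p.1 p.2.1 p.2.2 := by
    intro f
    rw [Finset.sum_product]
    exact Finset.sum_congr rfl fun t _ =>
      (Fintype.sum_prod_type (fun q : S × A => f t q.1 q.2)).symm
  -- Cauchy-Schwarz
  have hsum1 : ∑ t ∈ Finset.range H, ∑ s : S, ∑ a : A, d t s a = (H : ℝ) := by
    rw [Finset.sum_congr rfl fun t _ => occSA_sum P pistar d1 hP hpistar hd1 t]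
    simp
  have hsum2 : ∑ t ∈ Finset.range H, ∑ s : S, ∑ a : A, d t s a * c t s a ≤ (H : ℝ) ^ 2 :=
    sum_occ_condVar H P R pistar d1 hP hR hpistar hd1
  have CS : ∑ t ∈ Finset.range H, ∑ s : S, ∑ a : A, d t s a * Real.sqrt (c t s a)
      ≤ Real.sqrt ((H : ℝ) ^ 3) := by
    have key := Finset.sum_mul_sq_le_sq_mul_sq ((Finset.range H) ×ˢ (Finset.univ : Finset (S × A)))
      (fun p => Real.sqrt (d p.1 p.2.1 p.2.2))
      (fun p => Real.sqrt (d p.1 p.2.1 p.2.2 * c p.1 p.2.1 p.2.2))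
    have e1 : ∀ p : ℕ × S × A, Real.sqrt (d p.1 p.2.1 p.2.2)
        * Real.sqrt (d p.1 p.2.1 p.2.2 * c p.1 p.2.1 p.2.2)
        = d p.1 p.2.1 p.2.2 * Real.sqrt (c p.1 p.2.1 p.2.2) := by
      intro p
      rw [← Real.sqrt_mul (hdnn _ _ _), ← mul_assoc,
        show d p.1 p.2.1 p.2.2 * d p.1 p.2.1 p.2.2 = d p.1 p.2.1 p.2.2 ^ 2 by ring,
        Real.sqrt_mul (sq_nonneg _), Real.sqrt_sq (hdnn _ _ _)]
    have e2 : ∀ p : ℕ × S × A, Real.sqrt (d p.1 p.2.1 p.2.2) ^ 2 = d p.1 p.2.1 p.2.2 :=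
      fun p => Real.sq_sqrt (hdnn _ _ _)
    have e3 : ∀ p : ℕ × S × A, Real.sqrt (d p.1 p.2.1 p.2.2 * c p.1 p.2.1 p.2.2) ^ 2
        = d p.1 p.2.1 p.2.2 * c p.1 p.2.1 p.2.2 :=
      fun p => Real.sq_sqrt (mul_nonneg (hdnn _ _ _) (hcnn _ _ _))
    rw [Finset.sum_congr rfl fun p _ => e1 p, Finset.sum_congr rfl fun p _ => e2 p,
      Finset.sum_congr rfl fun p _ => e3 p] at key
    have k2 : (∑ t ∈ Finset.range H, ∑ s : S, ∑ a : A, d t s a * Real.sqrt (c t s a)) ^ 2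
        ≤ (∑ t ∈ Finset.range H, ∑ s : S, ∑ a : A, d t s a)
          * (∑ t ∈ Finset.range H, ∑ s : S, ∑ a : A, d t s a * c t s a) := by
      rw [flat fun t s a => d t s a * Real.sqrt (c t s a), flat fun t s a => d t s a,
        flat fun t s a => d t s a * c t s a]
      exact key
    rw [hsum1] at k2
    have hnn : 0 ≤ ∑ t ∈ Finset.range H, ∑ s : S, ∑ a : A, d t s a * Real.sqrt (c t s a) := by
      refine Finset.sum_nonneg fun t _ => Finset.sum_nonneg fun s _ =>
        Finset.sum_nonneg fun a _ => mul_nonneg (hdnn _ _ _) (Real.sqrt_nonneg _)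
    have hsq : (∑ t ∈ Finset.range H, ∑ s : S, ∑ a : A, d t s a * Real.sqrt (c t s a)) ^ 2
        ≤ (H : ℝ) ^ 3 := by
      refine k2.trans ?_
      calc (H : ℝ) * ∑ t ∈ Finset.range H, ∑ s : S, ∑ a : A, d t s a * c t s a
          ≤ (H : ℝ) * (H : ℝ) ^ 2 := mul_le_mul_of_nonneg_left hsum2 (by positivity)
        _ = (H : ℝ) ^ 3 := by ring
    calc ∑ t ∈ Finset.range H, ∑ s : S, ∑ a : A, d t s a * Real.sqrt (c t s a)
        = Real.sqrt ((∑ t ∈ Finset.range H, ∑ s : S, ∑ a : A,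
            d t s a * Real.sqrt (c t s a)) ^ 2) := (Real.sqrt_sq hnn).symm
      _ ≤ Real.sqrt ((H : ℝ) ^ 3) := Real.sqrt_le_sqrt hsq
  -- final chain
  calc ∑ t ∈ Finset.range H, ∑ s : S, ∑ a : A,
        (if 0 < occSA P pistar d1 t s a then
          occSA P pistar d1 t s a *
            Real.sqrt (condVar H P R pistar t s a / ((n : ℝ) * occSA P μ d1 t s a))
        else 0)
      ≤ ∑ t ∈ Finset.range H, ∑ s : S, ∑ a : A,
          d t s a * Real.sqrt (c t s a / ((n : ℝ) * dm)) :=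
        Finset.sum_le_sum fun t htm => Finset.sum_le_sum fun s _ =>
          Finset.sum_le_sum fun a _ => step1 t htm s a
    _ = ∑ t ∈ Finset.range H, ∑ s : S, ∑ a : A,
          d t s a * Real.sqrt (c t s a) * (Real.sqrt ((n : ℝ) * dm))⁻¹ := by
        refine Finset.sum_congr rfl fun t _ => Finset.sum_congr rfl fun s _ =>
          Finset.sum_congr rfl fun a _ => ?_
        rw [Real.sqrt_div (hcnn t s a), div_eq_mul_inv, mul_assoc]
    _ = (∑ t ∈ Finset.range H, ∑ s : S, ∑ a : A, d t s a * Real.sqrt (c t s a))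
          * (Real.sqrt ((n : ℝ) * dm))⁻¹ := by
        simp_rw [← Finset.sum_mul]
    _ ≤ Real.sqrt ((H : ℝ) ^ 3) * (Real.sqrt ((n : ℝ) * dm))⁻¹ := by
        refine mul_le_mul_of_nonneg_right CS (by positivity)
    _ = Real.sqrt ((H : ℝ) ^ 3 / ((n : ℝ) * dm)) := by
        rw [Real.sqrt_div (by positivity), div_eq_mul_inv]
end
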